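/- arXiv:2603.18890 — 14 statements merged into one kernel-verified Lean document; each statement's English description precedes it below -/
import Mathlib

section
/- Let R be a commutative ring with identity and let a ∈ R. If for every maximal ideal M of R there exists t ∈ R \ M such that ta = a², then a is von Neumann regular, i.e., there exists x ∈ R with a = a²x. -/
/-- If for every maximal ideal `M` there exists `t ∉ M` with `t * a = a ^ 2`,
then `a` is von Neumann regular: `a = a ^ 2 * x` for some `x`. -/
theorem vonNeumannRegular_of_forall_maximal_idem
    {R : Type*} [CommRing R] (a : R)
    (h : ∀ M : Ideal R, M.IsMaximal → ∃ t : R, t ∉ M ∧ t * a = a ^ 2) :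
    ∃ x : R, a = a ^ 2 * x := by
  set J : Ideal R := (Ideal.span {a ^ 2}).colon (Ideal.span {a}) with hJ
  have hJtop : J = ⊤ := by
    by_contra hne
    obtain ⟨M, hM, hJM⟩ := Ideal.exists_le_maximal J hne
    obtain ⟨t, htM, hta⟩ := h M hM
    apply htM
    apply hJM
    rw [hJ, Ideal.mem_colon_span_singleton, hta]
    exact Ideal.mem_span_singleton_self _
  have h1 : (1 : R) ∈ J := hJtop ▸ Submodule.mem_top
  rw [hJ, Ideal.mem_colon_span_singleton, one_mul, Ideal.mem_span_singleton] at h1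
  obtain ⟨x, hx⟩ := h1
  exact ⟨x, hx⟩
end

section
/- Let R be a commutative ring with identity and S a multiplicative subset of R. If a ∈ R is both S-von Neumann regular and S-nilpotent, then a is S-zero; that is, there exists r ∈ S with ra = 0. -/
/-- If `a` is both `S`-von Neumann regular and `S`-nilpotent, then `a` is `S`-zero. -/
theorem sZero_of_sVonNeumannRegular_of_sNilpotent
    {R : Type*} [CommRing R] (S : Submonoid R) (a : R)
    (hvnr : ∃ s ∈ S, ∃ b : R, s * a = a ^ 2 * b)
    (hnil : ∃ s ∈ S, ∃ n : ℕ, 1 ≤ n ∧ s * a ^ n = 0) :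
    ∃ r ∈ S, r * a = 0 := by
  obtain ⟨s, hs, b, hsb⟩ := hvnr
  obtain ⟨t, ht, n, hn, htn⟩ := hnil
  have key : ∀ k : ℕ, s ^ k * a = a ^ (k + 1) * b ^ k := by
    intro k
    induction k with
    | zero => simp
    | succ k ih =>
      calc s ^ (k + 1) * a = s * (s ^ k * a) := by ring
        _ = s * (a ^ (k + 1) * b ^ k) := by rw [ih]
        _ = (s * a) * (a ^ k * b ^ k) := by ring
        _ = (a ^ 2 * b) * (a ^ k * b ^ k) := by rw [hsb]
        _ = a ^ (k + 2) * b ^ (k + 1) := by ring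
  refine ⟨t * s ^ (n - 1), S.mul_mem ht (S.pow_mem hs _), ?_⟩
  have := key (n - 1)
  have hsucc : n - 1 + 1 = n := Nat.succ_pred_eq_of_pos hn
  calc t * s ^ (n - 1) * a = t * (s ^ (n - 1) * a) := by ring
    _ = t * (a ^ (n - 1 + 1) * b ^ (n - 1)) := by rw [this]
    _ = (t * a ^ n) * b ^ (n - 1) := by rw [hsucc]; ring
    _ = 0 := by rw [htn]; ring
end

section
/- Let R be a commutative ring with identity, S a multiplicative subset of R, and let a ∈ R be S-von Neumann regular. Then there exist s ∈ S and x ∈ R such that a²x = sa and x²a = sx. Moreover, if y ∈ R also satisfies a²y = sa and y²a = sy (with the same s), then s⁴y = s⁴x. -/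
/-- For an `S`-von Neumann regular element `a`, there exist `s ∈ S` and `x ∈ R`
with `a² x = s a` and `x² a = s x`; moreover such an `x` is unique up to
multiplication by `s ^ 4`. -/
theorem sVonNeumannRegular_exists_unique_quasi_inverse
    {R : Type*} [CommRing R] (S : Submonoid R) (a : R)
    (h : ∃ s ∈ S, ∃ b : R, s * a = a ^ 2 * b) :
    ∃ s ∈ S, ∃ x : R, a ^ 2 * x = s * a ∧ x ^ 2 * a = s * x ∧
      ∀ y : R, a ^ 2 * y = s * a → y ^ 2 * a = s * y → s ^ 4 * y = s ^ 4 * x := by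
  obtain ⟨s, hs, b, e⟩ := h
  refine ⟨s ^ 2, pow_mem hs 2, a * b ^ 2, ?_, ?_, ?_⟩
  · linear_combination -(a * b + s) * e
  · linear_combination -(b ^ 2) * (a * b + s) * e
  · intro y hy1 hy2
    have hx1 : a ^ 2 * (a * b ^ 2) = s ^ 2 * a := by linear_combination -(a * b + s) * e
    have hx2 : (a * b ^ 2) ^ 2 * a = s ^ 2 * (a * b ^ 2) := by
      linear_combination -(b ^ 2) * (a * b + s) * e
    set x := a * b ^ 2
    set t := s ^ 2 with ht
    linear_combination (t ^ 2 * (-t + a * x)) * hy2 - t ^ 2 * y ^ 2 * hx1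
      - (t ^ 2 * (-t + a * y)) * hx2 + t ^ 2 * x ^ 2 * hy1
end

section
/- Let R be a commutative ring with identity and S a multiplicative subset of R. Then R is uniformly S-reduced if and only if there exists s ∈ S such that the set of elements a ∈ R with s aⁿ = 0 for some integer n ≥ 1 is uniformly S-torsion, i.e., there exists t ∈ S such that ta = 0 for every a ∈ R satisfying s aⁿ = 0 for some n ≥ 1. -/
/-- `R` is uniformly `S`-reduced iff there exists `s ∈ S` such that `s`-nil(R)
is uniformly `S`-torsion. -/
theorem uniformlySReduced_iff_sNil_uniformlySTorsion
    {R : Type*} [CommRing R] (S : Submonoid R) :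
    (∃ s ∈ S, ∀ a : R, IsNilpotent a → s * a = 0) ↔
      (∃ s ∈ S, ∃ t ∈ S, ∀ a : R, (∃ n : ℕ, 1 ≤ n ∧ s * a ^ n = 0) → t * a = 0) := by
  constructor
  · rintro ⟨s, hs, h⟩
    refine ⟨s, hs, s * s, S.mul_mem hs hs, ?_⟩
    rintro a ⟨n, hn, han⟩
    have hnil : IsNilpotent (s * a) := by
      refine ⟨n, ?_⟩
      rcases Nat.exists_eq_add_of_le hn with ⟨k, rfl⟩
      rw [mul_pow]
      calc s ^ (1 + k) * a ^ (1 + k) = s ^ k * (s * a ^ (1 + k)) := by ring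
        _ = 0 := by rw [han, mul_zero]
    have := h _ hnil
    linear_combination this
  · rintro ⟨s, hs, t, ht, h⟩
    refine ⟨t, ht, ?_⟩
    rintro a ⟨n, han⟩
    rcases Nat.eq_zero_or_pos n with rfl | hn
    · simp [pow_zero] at han
      have : Subsingleton R := subsingleton_of_zero_eq_one han.symm
      exact h a ⟨1, le_refl 1, Subsingleton.elim _ _⟩
    · exact h a ⟨n, hn, by rw [han, mul_zero]⟩
end

section
/- Let R be a commutative ring with identity and S a multiplicative subset of R. If the set of S-von Neumann regular elements of R is closed under addition, then R is weakly S-reduced. -/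
/-- If the set of `S`-von Neumann regular elements of `R` is closed under
addition, then `R` is weakly `S`-reduced. -/
theorem weaklySReduced_of_sVnr_add_closed
    {R : Type*} [CommRing R] (S : Submonoid R)
    (h : ∀ a b : R, (∃ s ∈ S, ∃ x : R, s * a = a ^ 2 * x) →
      (∃ s ∈ S, ∃ x : R, s * b = b ^ 2 * x) →
      ∃ s ∈ S, ∃ x : R, s * (a + b) = (a + b) ^ 2 * x) :
    ∀ a : R, IsNilpotent a → ∃ r ∈ S, r * a = 0 := by
  -- Step 1: square-zero elements are S-zero.
  have key : ∀ a : R, a ^ 2 = 0 → ∃ r ∈ S, r * a = 0 := by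
    intro a hsq
    have h1 : ∃ s ∈ S, ∃ x : R, s * (a - 1) = (a - 1) ^ 2 * x :=
      ⟨1, S.one_mem, -(a + 1), by linear_combination (a - 1) * hsq⟩
    have h2 : ∃ s ∈ S, ∃ x : R, s * (1 : R) = (1 : R) ^ 2 * x :=
      ⟨1, S.one_mem, 1, by ring⟩
    obtain ⟨s, hs, x, hx⟩ := h (a - 1) 1 h1 h2
    refine ⟨s, hs, ?_⟩
    have hx' : s * a = a ^ 2 * x := by linear_combination hx
    linear_combination hx' + x * hsq
  -- Step 2: induction on the nilpotency exponent.
  intro a ha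
  obtain ⟨n, hn⟩ := ha
  induction n using Nat.strong_induction_on generalizing a with
  | _ n ih =>
    match n, hn with
    | 0, hn =>
      have h1 : (1 : R) = 0 := by simpa using hn
      exact ⟨1, S.one_mem, by rw [one_mul]; calc a = a * 1 := by ring
        _ = 0 := by rw [h1, mul_zero]⟩
    | 1, hn =>
      exact ⟨1, S.one_mem, by rw [one_mul]; simpa using hn⟩
    | (n + 2), hn =>
      have hsq : (a ^ 2) ^ (n + 1) = 0 := by
        have : (a ^ 2) ^ (n + 1) = a ^ (n + 2) * a ^ n := by ring
        rw [this, hn, zero_mul]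
      obtain ⟨r, hr, hra⟩ := ih (n + 1) (by omega) (a ^ 2) hsq
      have hra2 : (r * a) ^ 2 = 0 := by
        calc (r * a) ^ 2 = r * (r * a ^ 2) := by ring
          _ = 0 := by rw [hra, mul_zero]
      obtain ⟨s, hs, hsa⟩ := key (r * a) hra2
      exact ⟨s * r, S.mul_mem hs hr, by rw [mul_assoc]; exact hsa⟩
end

section
/- Let R be a commutative ring with identity and S a multiplicative subset of R. Suppose there exists s ∈ S such that the set {sⁿ : n ∈ ℕ} is finite and the set of elements that are S-von Neumann regular with respect to s is closed under addition. Then R is uniformly S-reduced. -/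
/-- If there exists `s ∈ S` with `{sⁿ : n ∈ ℕ}` finite such that the set of
elements that are `S`-von Neumann regular with respect to `s` is closed under
addition, then `R` is uniformly `S`-reduced. -/
theorem uniformlySReduced_of_sVnr_add_closed
    {R : Type*} [CommRing R] (S : Submonoid R) (s : R) (hs : s ∈ S)
    (hfin : (Set.range fun n : ℕ => s ^ n).Finite)
    (h : ∀ a b : R, (∃ x : R, s * a = a ^ 2 * x) → (∃ x : R, s * b = b ^ 2 * x) →
      ∃ x : R, s * (a + b) = (a + b) ^ 2 * x) :
    ∃ t ∈ S, ∀ a : R, IsNilpotent a → t * a = 0 := by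
  have hninj : ¬ Function.Injective (fun n : ℕ => s ^ n) := by
    intro hinj
    exact Set.infinite_range_of_injective hinj hfin
  rw [Function.not_injective_iff] at hninj
  obtain ⟨p, q, hpq, hne⟩ := hninj
  obtain ⟨m, k, hk, hmk⟩ : ∃ m k : ℕ, 0 < k ∧ s ^ m = s ^ (m + k) := by
    rcases lt_or_gt_of_ne hne with hlt | hlt
    · exact ⟨p, q - p, by omega, by rw [hpq]; congr 1; omega⟩
    · exact ⟨q, p - q, by omega, by rw [← hpq]; congr 1; omega⟩
  have hpow : ∀ j : ℕ, s ^ m = s ^ (m + j * k) := by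
    intro j
    induction j with
    | zero => simp
    | succ j ih =>
      have e : s ^ (m + (j + 1) * k) = s ^ (m + j * k) * s ^ k := by
        rw [← pow_add]; congr 1; ring
      rw [e, ← ih, ← pow_add, ← hmk]
  refine ⟨s ^ m, pow_mem hs m, ?_⟩
  intro a ha
  obtain ⟨n, hn⟩ := ha
  have hu : IsUnit (1 + a) := IsNilpotent.isUnit_one_add ⟨n, hn⟩
  obtain ⟨v, hv⟩ := hu.exists_right_inv
  have h1 : ∃ x : R, s * (1 + a) = (1 + a) ^ 2 * x := by
    refine ⟨v * s, ?_⟩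
    rw [sq, show (1 + a) * (1 + a) * (v * s) = (1 + a) * ((1 + a) * v) * s by ring, hv]
    ring
  have h2 : ∃ x : R, s * (-1 : R) = (-1 : R) ^ 2 * x := ⟨-s, by ring⟩
  obtain ⟨b, hb⟩ := h (1 + a) (-1) h1 h2
  have hb' : s * a = a ^ 2 * b := by
    have e : (1 : R) + a + -1 = a := by ring
    rwa [e] at hb
  have hiter : ∀ j : ℕ, s ^ j * a = a ^ (j + 1) * b ^ j := by
    intro j
    induction j with
    | zero => simp
    | succ j ih =>
      calc s ^ (j + 1) * a = s * (s ^ j * a) := by ring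
        _ = s * (a ^ (j + 1) * b ^ j) := by rw [ih]
        _ = (s * a) * (a ^ j * b ^ j) := by ring
        _ = (a ^ 2 * b) * (a ^ j * b ^ j) := by rw [hb']
        _ = a ^ (j + 1 + 1) * b ^ (j + 1) := by ring
  have hna : s ^ n * a = 0 := by
    rw [hiter n, pow_succ, hn]; ring
  have hnk : n ≤ n * k := Nat.le_mul_of_pos_right n hk
  calc s ^ m * a = s ^ (m + n * k) * a := by rw [← hpow n]
    _ = s ^ (m + n * k - n) * (s ^ n * a) := by
        rw [← mul_assoc, ← pow_add]; congr 2; omega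
    _ = 0 := by rw [hna, mul_zero]
end

section
/- Let R be a commutative ring with identity and S a multiplicative subset of R such that 2 = 1 + 1 is S-invertible. If a ∈ R is S-von Neumann regular, then there exists s ∈ S such that sa is the sum of two S-invertible elements of R. -/
/-- If `2` is `S`-invertible and `a` is `S`-von Neumann regular, then there is
`s ∈ S` such that `s * a` is a sum of two `S`-invertible elements. -/
theorem sVnr_smul_eq_add_of_two_sInvertible
    {R : Type*} [CommRing R] (S : Submonoid R)
    (h2 : ∃ b : R, (2 : R) * b ∈ S) (a : R)
    (ha : ∃ s ∈ S, ∃ b : R, s * a = a ^ 2 * b) :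
    ∃ s ∈ S, ∃ u v : R, (∃ c : R, u * c ∈ S) ∧ (∃ c : R, v * c ∈ S) ∧
      s * a = u + v := by
  obtain ⟨b0, hb0⟩ := h2
  obtain ⟨s, hs, b, hab⟩ := ha
  -- key algebraic facts
  have hae : a * (a * b) = s * a := by linear_combination -hab
  have he : (a * b) * (a * b) = s * (a * b) := by linear_combination -(b * hab)
  -- U is the "unit" part, I its quasi-inverse: U * I = s^3
  set e := a * b with he_def
  set U := a * s + s - e with hU_def
  set I := e * b + s * s - e * s with hI_def
  have hUI : U * I = s ^ 3 := by
    simp only [hU_def, hI_def, he_def]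
    linear_combination (s * b - s ^ 2) * hae + (s - b) * he
  have hsq : (2 * e - s) * (2 * e - s) = s ^ 2 := by
    linear_combination 4 * he
  refine ⟨2 * b0 * (s * s), S.mul_mem hb0 (S.mul_mem hs hs),
    U * (2 * e - s) * b0, U * s * b0, ⟨I * (2 * e - s) * 2, ?_⟩,
    ⟨I * 2, ?_⟩, ?_⟩
  · have : U * (2 * e - s) * b0 * (I * (2 * e - s) * 2) =
        2 * b0 * (s * s * (s * s * s)) := by
      linear_combination (2 * b0 * (2 * e - s) * (2 * e - s)) * hUI +
        (2 * b0 * s ^ 3) * hsq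
    rw [this]
    exact S.mul_mem hb0 (S.mul_mem (S.mul_mem hs hs) (S.mul_mem (S.mul_mem hs hs) hs))
  · have : U * s * b0 * (I * 2) = 2 * b0 * (s * (s * s * s)) := by
      linear_combination (2 * b0 * s) * hUI
    rw [this]
    exact S.mul_mem hb0 (S.mul_mem hs (S.mul_mem (S.mul_mem hs hs) hs))
  · simp only [hU_def, he_def]
    linear_combination -(2 * b0 * s) * hae + (2 * b0) * he
end

section
/- Let R be a commutative ring with identity and S a multiplicative subset of R such that 2 = 1 + 1 is S-invertible. The following are equivalent: (1) the set of S-von Neumann regular elements of R is closed under addition; (2) the sum of any four S-invertible elements of R is S-von Neumann regular; (3) u(s + k) + v(t + m) is S-von Neumann regular whenever s, t ∈ S and u, v, k, m are S-invertible elements of R with k² ∈ S and m² ∈ S. -/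
section

variable {R : Type*} [CommRing R] (S : Submonoid R)

/-- `a` is `S`-invertible: `a * b ∈ S` for some `b`. -/
def SInvertible (a : R) : Prop := ∃ b : R, a * b ∈ S

/-- `a` is `S`-von Neumann regular: `s * a = a ^ 2 * b` for some `s ∈ S`, `b ∈ R`. -/
def SVnr (a : R) : Prop := ∃ s ∈ S, ∃ b : R, s * a = a ^ 2 * b

lemma sInvertible_of_mem {a : R} (h : a ∈ S) : SInvertible S a :=
  ⟨1, by simpa using h⟩

lemma sInvertible_mul {a b : R} (ha : SInvertible S a) (hb : SInvertible S b) :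
    SInvertible S (a * b) := by
  obtain ⟨x, hx⟩ := ha
  obtain ⟨y, hy⟩ := hb
  refine ⟨x * y, ?_⟩
  rw [show a * b * (x * y) = a * x * (b * y) by ring]
  exact S.mul_mem hx hy

lemma sVnr_of_sInvertible {a : R} (ha : SInvertible S a) : SVnr S a := by
  obtain ⟨b, hb⟩ := ha
  exact ⟨a * b, hb, b, by ring⟩

lemma sVnr_of_mul {w a : R} (hw : SInvertible S w) (h : SVnr S (w * a)) : SVnr S a := by
  obtain ⟨w', hw'⟩ := hw
  obtain ⟨s, hs, d, hd⟩ := h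
  exact ⟨s * (w * w'), S.mul_mem hs hw', w ^ 2 * w' * d, by linear_combination w' * hd⟩

/-- Key representation: if `a` is `S`-vnr then `w * (s + k) = 2*s*a` for some
`s ∈ S`, S-invertible `k` with `k² ∈ S`, and S-invertible `w`. -/
lemma sVnr_rep {a : R} (ha : SVnr S a) :
    ∃ s ∈ S, ∃ k w : R, SInvertible S k ∧ k ^ 2 ∈ S ∧ SInvertible S w ∧
      w * (s + k) = 2 * s * a := by
  obtain ⟨s, hs, c, hc⟩ := ha
  refine ⟨s, hs, 2 * (a * c) - s, a + s - a * c, ?_, ?_, ?_, by linear_combination (2 * c - 2) * hc⟩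
  · refine ⟨2 * (a * c) - s, ?_⟩
    rw [show (2 * (a * c) - s) * (2 * (a * c) - s) = s * s by linear_combination (-4 * c) * hc]
    exact S.mul_mem hs hs
  · rw [show (2 * (a * c) - s) ^ 2 = s * s by linear_combination (-4 * c) * hc]
    exact S.mul_mem hs hs
  · refine ⟨a * c ^ 2 + s - a * c, ?_⟩
    rw [show (a + s - a * c) * (a * c ^ 2 + s - a * c) = s * s by
      linear_combination (1 - c) ^ 2 * hc]
    exact S.mul_mem hs hs

/-- When `2` is `S`-invertible, the set of `S`-von Neumann regular elements is
closed under addition iff the sum of any four `S`-invertible elements is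
`S`-von Neumann regular, iff `u(s+k) + v(t+m)` is `S`-von Neumann regular for
all `s, t ∈ S` and `S`-invertible `u, v, k, m` with `k², m² ∈ S`. -/
theorem sVnr_add_closed_tfae (h2 : SInvertible S (2 : R)) :
    List.TFAE
      [ ∀ a b : R, SVnr S a → SVnr S b → SVnr S (a + b),
        ∀ u₁ u₂ u₃ u₄ : R, SInvertible S u₁ → SInvertible S u₂ →
          SInvertible S u₃ → SInvertible S u₄ → SVnr S (u₁ + u₂ + u₃ + u₄),
        ∀ s ∈ S, ∀ t ∈ S, ∀ u v k m : R, SInvertible S u → SInvertible S v →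
          SInvertible S k → SInvertible S m → k ^ 2 ∈ S → m ^ 2 ∈ S →
          SVnr S (u * (s + k) + v * (t + m)) ] := by
  tfae_have 1 → 2
  | h1, u₁, u₂, u₃, u₄, h₁, h₂, h₃, h₄ =>
    h1 _ _ (h1 _ _ (h1 _ _ (sVnr_of_sInvertible S h₁) (sVnr_of_sInvertible S h₂))
      (sVnr_of_sInvertible S h₃)) (sVnr_of_sInvertible S h₄)
  tfae_have 2 → 3
  | h, s, hs, t, ht, u, v, k, m, hu, hv, hk, hm, _, _ => by
    have := h (u * s) (u * k) (v * t) (v * m)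
      (sInvertible_mul S hu (sInvertible_of_mem S hs)) (sInvertible_mul S hu hk)
      (sInvertible_mul S hv (sInvertible_of_mem S ht)) (sInvertible_mul S hv hm)
    rwa [show u * s + u * k + v * t + v * m = u * (s + k) + v * (t + m) by ring] at this
  tfae_have 3 → 1
  | h3, a, b, ha, hb => by
    obtain ⟨s, hs, k, w, hk, hk2, hw, hwa⟩ := sVnr_rep S ha
    obtain ⟨t, ht, m, w', hm, hm2, hw', hwb⟩ := sVnr_rep S hb
    have hu : SInvertible S (2 * t * w) :=
      sInvertible_mul S (sInvertible_mul S h2 (sInvertible_of_mem S ht)) hw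
    have hv : SInvertible S (2 * s * w') :=
      sInvertible_mul S (sInvertible_mul S h2 (sInvertible_of_mem S hs)) hw'
    have key := h3 s hs t ht _ _ k m hu hv hk hm hk2 hm2
    rw [show 2 * t * w * (s + k) + 2 * s * w' * (t + m) = 2 * (2 * (s * t)) * (a + b) by
      linear_combination 2 * t * hwa + 2 * s * hwb] at key
    exact sVnr_of_mul S
      (sInvertible_mul S h2 (sInvertible_mul S h2
        (sInvertible_mul S (sInvertible_of_mem S hs) (sInvertible_of_mem S ht)))) key
  tfae_finish

end
end

section
/- Let R be a commutative ring with identity and S a multiplicative subset of R. Then every element of R is S-π-regular if and only if the localization R_S of R at S is a π-regular ring, i.e., every element y of R_S satisfies yⁿ = y^{2n} x for some integer n ≥ 1 and some x ∈ R_S. -/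
/-- Every element of `R` is `S`-π-regular iff the localization `R_S` is a
π-regular ring. -/
theorem forall_sPiRegular_iff_localization_piRegular
    {R : Type*} [CommRing R] (S : Submonoid R) :
    (∀ a : R, ∃ s ∈ S, ∃ b : R, ∃ n : ℕ, 1 ≤ n ∧ s * a ^ n = a ^ (2 * n) * b) ↔
      (∀ y : Localization S, ∃ n : ℕ, 1 ≤ n ∧ ∃ x : Localization S,
        y ^ n = y ^ (2 * n) * x) := by
  constructor
  · intro h y
    induction y using Localization.induction_on with
    | _ p =>
    obtain ⟨a, t⟩ := p
    obtain ⟨s, hs, b, n, hn, hab⟩ := h a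
    refine ⟨n, hn, Localization.mk (b * t ^ n) ⟨s, hs⟩, ?_⟩
    rw [Localization.mk_pow, Localization.mk_pow, Localization.mk_mul,
      Localization.mk_eq_mk_iff, Localization.r_iff_exists]
    refine ⟨1, ?_⟩
    push_cast
    linear_combination (t : R) ^ (2 * n) * hab
  · intro h a
    obtain ⟨n, hn, x, hx⟩ := h (Localization.mk a 1)
    induction x using Localization.induction_on with
    | _ p =>
    obtain ⟨c, t⟩ := p
    rw [Localization.mk_pow, Localization.mk_pow, Localization.mk_mul,
      Localization.mk_eq_mk_iff, Localization.r_iff_exists] at hx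
    obtain ⟨u, hu⟩ := hx
    refine ⟨u * ((1 : S) ^ (2*n) * t), mul_mem u.2 (mul_mem (pow_mem (one_mem S) _) t.2),
      u * c, n, hn, ?_⟩
    push_cast at hu ⊢
    calc (u : R) * (1 ^ (2*n) * t) * a ^ n = u * ((1:R)^(2*n) * t * a ^ n) := by ring
      _ = u * ((1:R) ^ n * (a ^ (2*n) * c)) := hu
      _ = a ^ (2*n) * (u * c) := by ring
end

section
/- Let R be a commutative ring with identity and S a multiplicative subset of R. If R is S-Artinian, then every element of R is S-π-regular. -/
/-- If `R` is `S`-Artinian, then every element of `R` is `S`-π-regular. -/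
theorem sPiRegular_of_sArtinian
    {R : Type*} [CommRing R] (S : Submonoid R)
    (hart : ∀ I : ℕ → Ideal R, (∀ n : ℕ, I (n + 1) ≤ I n) →
      ∃ k : ℕ, ∃ s ∈ S, ∀ n ≥ k, ∀ x ∈ I k, s * x ∈ I n) :
    ∀ a : R, ∃ s ∈ S, ∃ b : R, ∃ n : ℕ, 1 ≤ n ∧ s * a ^ n = a ^ (2 * n) * b := by
  intro a
  obtain ⟨k, s, hs, hk⟩ := hart (fun n => Ideal.span {a ^ n}) (by
    intro n
    rw [Ideal.span_singleton_le_span_singleton]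
    exact ⟨a, pow_succ a n⟩)
  have hmem : a ^ (k + 1) ∈ Ideal.span {a ^ k} := by
    rw [Ideal.mem_span_singleton]
    exact ⟨a, pow_succ a k⟩
  have h := hk (2 * (k + 1)) (by omega) _ hmem
  rw [Ideal.mem_span_singleton] at h
  obtain ⟨b, hb⟩ := h
  exact ⟨s, hs, b, k + 1, le_refl _ |>.trans (by omega), hb⟩
end

section
/- Let R be a commutative ring with identity and S a multiplicative subset of R. If R is uniformly S-Artinian, then R is uniformly S-π-regular; that is, there exists s ∈ S such that for every a ∈ R there exist b ∈ R and an integer n ≥ 1 with s aⁿ = a^{2n} b. -/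
/-- If `R` is uniformly `S`-Artinian, then `R` is uniformly `S`-π-regular. -/
theorem uniformlySPiRegular_of_uniformlySArtinian
    {R : Type*} [CommRing R] (S : Submonoid R)
    (hart : ∃ s ∈ S, ∀ I : ℕ → Ideal R, (∀ n : ℕ, I (n + 1) ≤ I n) →
      ∃ k : ℕ, ∀ n ≥ k, ∀ x ∈ I k, s * x ∈ I n) :
    ∃ s ∈ S, ∀ a : R, ∃ b : R, ∃ n : ℕ, 1 ≤ n ∧ s * a ^ n = a ^ (2 * n) * b := by
  obtain ⟨s, hs, h⟩ := hart
  refine ⟨s, hs, fun a => ?_⟩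
  obtain ⟨k, hk⟩ := h (fun n => Ideal.span {a ^ (n + 1)}) (fun n => by
    rw [Ideal.span_singleton_le_span_singleton]
    exact ⟨a, by ring⟩)
  have hmem : s * a ^ (k + 1) ∈ Ideal.span {a ^ (2 * k + 1 + 1)} := by
    exact hk (2 * k + 1) (by omega) _ (Ideal.mem_span_singleton_self _)
  rw [Ideal.mem_span_singleton] at hmem
  obtain ⟨b, hb⟩ := hmem
  exact ⟨b, k + 1, by omega, by rw [hb]; ring_nf⟩
end

section
/- Let R be a commutative ring with identity and S a multiplicative subset of R containing no units of R except 1 (every element of S that is a unit equals 1). Then every element of R is either S-idempotent or nilpotent if and only if R is S-Boolean, i.e., every element of R is S-idempotent. -/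
/-- If `S` contains no unit except `1`, then every element of `R` is either
`S`-idempotent or nilpotent iff `R` is `S`-Boolean. -/
theorem sBoolean_iff_sIdem_or_nilpotent
    {R : Type*} [CommRing R] (S : Submonoid R)
    (hS : ∀ s ∈ S, IsUnit s → s = 1) :
    (∀ a : R, (∃ s ∈ S, s * a = a ^ 2) ∨ IsNilpotent a) ↔
      (∀ a : R, ∃ s ∈ S, s * a = a ^ 2) := by
  constructor
  · intro h a
    rcases h a with hi | hn
    · exact hi
    · have ha : a = 0 := by
        rcases h (1 + a) with ⟨s, hs, hsa⟩ | hn1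
        · have hu : IsUnit (1 + a) := IsNilpotent.isUnit_one_add hn
          have hse : s = 1 + a := by
            apply hu.mul_left_cancel
            rw [mul_comm (1 + a) s, hsa, sq]
          have hs1 : s = 1 := hS s hs (hse ▸ hu)
          have : (1 : R) + a = 1 := by rw [← hse, hs1]
          linear_combination this
        · have h1 : IsNilpotent (1 : R) := by
            have := Commute.isNilpotent_sub (Commute.all (1 + a) a) hn1 hn
            simpa using this
          obtain ⟨n, hn1'⟩ := h1
          have h01 : (0 : R) = 1 := by simpa using hn1'.symm
          have : Subsingleton R := subsingleton_of_zero_eq_one h01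
          exact Subsingleton.elim a 0
      exact ⟨1, S.one_mem, by simp [ha]⟩
  · intro h a
    exact Or.inl (h a)
end

section
/- Let R be a commutative ring with identity, S a multiplicative subset of R, and s ∈ S. Assume there exists a zero-divisor x of R with x ≠ 0 and x ≠ s, and that every nonzero zero-divisor a of R satisfies sa = a². Then s²y = s² for every non-zero-divisor y ∈ R (in particular s²y ∈ S), and R is uniformly S-von Neumann regular with respect to s²: every a ∈ R satisfies s²a = a²b for some b ∈ R. -/
/-- If `R` has a zero-divisor `x` with `x ≠ 0`, `x ≠ s`, and every nonzero
zero-divisor `a` satisfies `s * a = a ^ 2`, then `s ^ 2 * y = s ^ 2` for every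
non-zero-divisor `y`, and `R` is uniformly `S`-von Neumann regular with respect
to `s ^ 2`. -/
theorem uniformlySVnr_of_zeroDivisors_sIdem
    {R : Type*} [CommRing R] (S : Submonoid R) (s : R) (hs : s ∈ S)
    (hx : ∃ x : R, x ∉ nonZeroDivisors R ∧ x ≠ 0 ∧ x ≠ s)
    (h : ∀ a : R, a ∉ nonZeroDivisors R → a ≠ 0 → s * a = a ^ 2) :
    (∀ y ∈ nonZeroDivisors R, s ^ 2 * y = s ^ 2) ∧
      (∀ a : R, ∃ b : R, s ^ 2 * a = a ^ 2 * b) := by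
  obtain ⟨x, hxz, hx0, hxs⟩ := hx
  have hsx : s * x = x ^ 2 := h x hxz hx0
  -- a witness z with z * x = 0, z ≠ 0
  have hxz' := hxz
  rw [mem_nonZeroDivisors_iff_right] at hxz'
  push_neg at hxz'
  obtain ⟨z, hzx, hz0⟩ := hxz'
  have key : ∀ y ∈ nonZeroDivisors R, s ^ 2 * y = s ^ 2 := by
    intro y hy
    have hycan : ∀ c : R, c * y = 0 → c = 0 := fun c hc =>
      mem_nonZeroDivisors_iff_right.mp hy c hc
    -- x * y is a nonzero zero divisor
    have hxy0 : x * y ≠ 0 := fun h0 => hx0 (hycan x h0)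
    have hxyz : x * y ∉ nonZeroDivisors R := fun hmem =>
      hz0 (mem_nonZeroDivisors_iff_right.mp hmem z (by
        rw [← mul_assoc, hzx, zero_mul]))
    have hw : s * (x * y) = (x * y) ^ 2 := h _ hxyz hxy0
    -- x * (s * (y - 1)) * y = 0
    have h1 : x * (s * (y - 1)) * y = 0 := by
      linear_combination y ^ 2 * hsx - hw
    have hxu : x * (s * (y - 1)) = 0 := hycan _ h1
    by_cases hu0 : s * (y - 1) = 0
    · linear_combination s * hu0
    · -- u := s*(y-1) is a nonzero zero divisor
      have huz : s * (y - 1) ∉ nonZeroDivisors R := fun hmem =>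
        hx0 (mem_nonZeroDivisors_iff_right.mp hmem x hxu)
      have hsu : s * (s * (y - 1)) = (s * (y - 1)) ^ 2 := h _ huz hu0
      -- u * y is a nonzero zero divisor
      have huy0 : s * (y - 1) * y ≠ 0 := fun h0 => hu0 (hycan _ h0)
      have huyz : s * (y - 1) * y ∉ nonZeroDivisors R := fun hmem =>
        hx0 (mem_nonZeroDivisors_iff_right.mp hmem x (by
          rw [show x * (s * (y - 1) * y) = x * (s * (y - 1)) * y by ring,
            hxu, zero_mul]))
      have hsz : s * (s * (y - 1) * y) = (s * (y - 1) * y) ^ 2 := h _ huyz huy0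
      -- cancel one y: A : s²(y-1) = s²(y-1)² * y
      have hA : (s ^ 2 * (y - 1) - s ^ 2 * (y - 1) ^ 2 * y) * y = 0 := by
        linear_combination hsz
      have hA' : s ^ 2 * (y - 1) = s ^ 2 * (y - 1) ^ 2 * y := by
        linear_combination hycan _ hA
      have hB : s ^ 2 * (y - 1) = s ^ 2 * (y - 1) * y := by
        linear_combination hA' - y * hsu
      linear_combination hsu - hB
  refine ⟨key, fun a => ?_⟩
  by_cases ha0 : a = 0
  · exact ⟨0, by simp [ha0]⟩
  by_cases haz : a ∈ nonZeroDivisors R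
  · have hka := key a haz
    exact ⟨s ^ 2, by linear_combination (-a) * hka⟩
  · have hsa := h a haz ha0
    exact ⟨s, by linear_combination s * hsa⟩
end

section
/- Let R be a commutative ring with identity and S a multiplicative subset of R such that R is S-Boolean. If P is an S-primary ideal of R, then P is an S-maximal ideal of R. -/
section

variable {R : Type*} [CommRing R] (S : Submonoid R)

/-- An ideal `M` is `S`-maximal if `M ∩ S = ∅` and there exists `s ∈ S` such that
for every ideal `I` containing `M`, either `s • I ⊆ M` or `I ∩ S ≠ ∅`. -/
def SMaximal (M : Ideal R) : Prop :=
  Disjoint (M : Set R) (S : Set R) ∧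
    ∃ s ∈ S, ∀ I : Ideal R, M ≤ I → (∀ x ∈ I, s * x ∈ M) ∨ ∃ x ∈ I, x ∈ S

/-- An ideal `P` is `S`-primary if `P ∩ S = ∅` and there exists `t ∈ S` such that
`a * b ∈ P` implies `t * a ∈ P` or `t * b ∈ rad(P)`. -/
def SPrimary (P : Ideal R) : Prop :=
  Disjoint (P : Set R) (S : Set R) ∧
    ∃ t ∈ S, ∀ a b : R, a * b ∈ P → t * a ∈ P ∨ t * b ∈ P.radical

/-- Over an `S`-Boolean ring, every `S`-primary ideal is `S`-maximal. -/
theorem sMaximal_of_sPrimary_of_sBoolean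
    (hbool : ∀ a : R, ∃ s ∈ S, s * a = a ^ 2)
    (P : Ideal R) (hP : SPrimary S P) : SMaximal S P := by
  obtain ⟨hdisj, t, htS, ht⟩ := hP
  refine ⟨hdisj, t, htS, fun I hPI => ?_⟩
  by_cases h : ∀ x ∈ I, t * x ∈ P
  · exact Or.inl h
  · right
    push_neg at h
    obtain ⟨x, hxI, hx⟩ := h
    obtain ⟨s, hsS, hs⟩ := hbool x
    have hmem : x * (s - x) ∈ P := by
      have h0 : x * (s - x) = 0 := by rw [mul_sub, mul_comm x s, hs]; ring
      rw [h0]; exact P.zero_mem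
    rcases ht x (s - x) hmem with h1 | h2
    · exact absurd h1 hx
    · obtain ⟨n, hn⟩ := h2
      refine ⟨(t * s) ^ n, ?_, pow_mem (mul_mem htS hsS) n⟩
      have hP' : (t * (s - x)) ^ n ∈ I := hPI hn
      rw [← Ideal.Quotient.eq_zero_iff_mem]
      have heq : (Ideal.Quotient.mk I) ((t * s) ^ n)
          = (Ideal.Quotient.mk I) ((t * (s - x)) ^ n) := by
        rw [map_pow, map_pow, map_mul, map_mul, map_sub,
          Ideal.Quotient.eq_zero_iff_mem.mpr hxI, sub_zero]
      rw [heq]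
      exact Ideal.Quotient.eq_zero_iff_mem.mpr hP' 

end
end
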